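/- Let F_1 and F_2 be regular graphs that are A-cospectral, and let H_1 and H_2 be regular graphs that are A-cospectral. Then the T-edge neighbourhood coronas F_1 ⊟_T H_1 and F_2 ⊟_T H_2 are A-cospectral. -/

import Mathlib

open Finset Matrix Polynomial

/-- The vertex-edge incidence matrix `R(G)` of a graph `G`: rows indexed by vertices,
columns indexed by edges, with entry `1` exactly when the vertex is incident with the edge. -/
def incMat {V : Type*} [DecidableEq V] (G : SimpleGraph V) : Matrix V G.edgeSet ℝ :=
  Matrix.of fun v e => if v ∈ (e : Sym2 V) then (1 : ℝ) else 0

/-- The `M`-coronal `Γ_M(x)`: the sum of all entries of `(xI - M)⁻¹`. -/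
noncomputable def coronal {n : Type*} [Fintype n] [DecidableEq n]
    (M : Matrix n n ℝ) (x : ℝ) : ℝ :=
  ∑ i, ∑ j, (x • (1 : Matrix n n ℝ) - M)⁻¹ i j

/-- The T-vertex neighbourhood corona `G₁ ⊡_T G₂`: the disjoint union of the T-graph
`T(G₁)` (on `V₁ ⊕ E(G₁)`) and one copy of `G₂` for each vertex of `G₁`, where every
vertex of the `i`-th copy of `G₂` is joined to every neighbour of `vᵢ` in `T(G₁)`,
i.e. to every vertex of `G₁` adjacent to `vᵢ` and to every edge of `G₁` incident with `vᵢ`. -/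
def tVertexCorona {V₁ V₂ : Type*} (G₁ : SimpleGraph V₁) (G₂ : SimpleGraph V₂) :
    SimpleGraph (V₁ ⊕ (G₁.edgeSet ⊕ V₁ × V₂)) :=
  SimpleGraph.fromRel fun a b =>
    match a, b with
    | Sum.inl u, Sum.inl v => G₁.Adj u v
    | Sum.inl u, Sum.inr (Sum.inl e) => u ∈ (e : Sym2 V₁)
    | Sum.inl u, Sum.inr (Sum.inr iw) => G₁.Adj u iw.1
    | Sum.inr (Sum.inl e), Sum.inr (Sum.inl f) => ∃ v, v ∈ (e : Sym2 V₁) ∧ v ∈ (f : Sym2 V₁)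
    | Sum.inr (Sum.inl e), Sum.inr (Sum.inr iw) => iw.1 ∈ (e : Sym2 V₁)
    | Sum.inr (Sum.inr iw), Sum.inr (Sum.inr jw) => iw.1 = jw.1 ∧ G₂.Adj iw.2 jw.2
    | _, _ => False

/-- The T-edge neighbourhood corona `G₁ ⊟_T G₂`: the disjoint union of the T-graph
`T(G₁)` (on `V₁ ⊕ E(G₁)`) and one copy of `G₂` for each edge of `G₁`, where every
vertex of the `i`-th copy of `G₂` is joined to the two endpoints of the edge `eᵢ`
(as vertices of `G₁` inside `T(G₁)`). -/
def tEdgeCorona {V₁ V₂ : Type*} (G₁ : SimpleGraph V₁) (G₂ : SimpleGraph V₂) :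
    SimpleGraph (V₁ ⊕ (G₁.edgeSet ⊕ G₁.edgeSet × V₂)) :=
  SimpleGraph.fromRel fun a b =>
    match a, b with
    | Sum.inl u, Sum.inl v => G₁.Adj u v
    | Sum.inl u, Sum.inr (Sum.inl e) => u ∈ (e : Sym2 V₁)
    | Sum.inl u, Sum.inr (Sum.inr ew) => u ∈ (ew.1 : Sym2 V₁)
    | Sum.inr (Sum.inl e), Sum.inr (Sum.inl f) => ∃ v, v ∈ (e : Sym2 V₁) ∧ v ∈ (f : Sym2 V₁)
    | Sum.inr (Sum.inr ew), Sum.inr (Sum.inr fw) => ew.1 = fw.1 ∧ G₂.Adj ew.2 fw.2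
    | _, _ => False

noncomputable instance {V₁ V₂ : Type*} (G₁ : SimpleGraph V₁) (G₂ : SimpleGraph V₂) :
    DecidableRel (tVertexCorona G₁ G₂).Adj := Classical.decRel _

noncomputable instance {V₁ V₂ : Type*} (G₁ : SimpleGraph V₁) (G₂ : SimpleGraph V₂) :
    DecidableRel (tEdgeCorona G₁ G₂).Adj := Classical.decRel _

noncomputable instance {V : Type*} (G : SimpleGraph V) :
    DecidableRel (G.lineGraph).Adj := Classical.decRel _


/-!
Order the vertices of `F ⊟_T H` as `(V(F) ⊕ E(F)) ⊕ (E(F) × V(H))`. The block of the copies of `H`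
in `x - A` is `I ⊗ (x - A_H)`, and its Schur complement adds `Γ_H(x) R Rᵀ` to the vertex block,
`R` being the incidence matrix of `F` and `Γ_H(x) = |V(H)| / (x - d)` the coronal of the
`d`-regular graph `H`. Since `RᵀR = A(L(F)) + 2` and, for `c`-regular `F`, `R Rᵀ = A_F + c`, one
more elimination leaves `det q(A_F)` for a polynomial `q` depending only on `c`, `x` and `Γ_H(x)`.
For the symmetric matrix `A_F`, `det q(A_F) = ∏ q(λᵢ)` is determined by the spectrum, and so are
the number of vertices, the number of edges (`tr A² = 2|E|`) and the degree of regularity. Hence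
the two characteristic polynomials agree away from finitely many `x`.
-/

open scoped Kronecker

namespace Matrix

section Blocks

variable {R K : Type*} [CommRing R] [Field K] {m n : Type*} [Fintype m] [DecidableEq m]
  [Fintype n] [DecidableEq n]

theorem det_smul_one_sub_submatrix_equiv {l : Type*} [Fintype l] [DecidableEq l] (e : l ≃ m)
    (x : R) (M : Matrix m m R) : det (x • 1 - M.submatrix e e) = det (x • 1 - M) := by
  rw [← det_submatrix_equiv_self e (x • 1 - M)]
  congr 1
  ext i j
  simp [one_apply]

theorem smul_one_sub_fromBlocks {α l o : Type*} [Ring α] [DecidableEq l] [DecidableEq o] (x : α)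
    (A : Matrix l l α) (B : Matrix l o α) (C : Matrix o l α) (D : Matrix o o α) :
    x • 1 - fromBlocks A B C D = fromBlocks (x • 1 - A) (-B) (-C) (x • 1 - D) := by
  ext (i | i) (j | j) <;> simp [one_apply]

theorem det_smul_one_sub_fromBlocks (x : R) (A : Matrix m m R) (B : Matrix m n R)
    (C : Matrix n m R) (D : Matrix n n R) (hD : IsUnit (x • 1 - D).det) :
    det (x • 1 - fromBlocks A B C D) =
      det (x • 1 - D) * det (x • 1 - (A + B * (x • 1 - D)⁻¹ * C)) := by
  let := invertibleOfIsUnitDet _ hD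
  rw [smul_one_sub_fromBlocks, det_fromBlocks₂₂, invOf_eq_nonsing_inv, sub_sub]
  simp only [Matrix.neg_mul, Matrix.mul_neg, neg_neg]

/-- Subtracting `Rᵀ` times the first block row from the second turns the lower right block into
the scalar `y`, which is then eliminated by a Schur complement. -/
theorem det_fromBlocks_smul_one_sub_transpose_mul_self (P : Matrix m m K) (R : Matrix m n K)
    {y : K} (hy : y ≠ 0) :
    det (fromBlocks P (-R) (-Rᵀ) (y • 1 - Rᵀ * R)) * y ^ Fintype.card m =
      y ^ Fintype.card n * det (y • P - R * Rᵀ * (1 + P)) := by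
  have hL : det (fromBlocks 1 0 (-Rᵀ) 1 : Matrix (m ⊕ n) (m ⊕ n) K) = 1 := by simp
  have hLN : fromBlocks 1 0 (-Rᵀ) 1 * fromBlocks P (-R) (-Rᵀ) (y • 1 - Rᵀ * R) =
      fromBlocks P (-R) (-(Rᵀ * (1 + P))) (y • 1) := by
    simp [fromBlocks_multiply, Matrix.mul_add, Matrix.mul_sub]
  let : Invertible (y • 1 : Matrix n n K) :=
    invertibleOfLeftInverse _ (y⁻¹ • 1) (by simp [smul_smul, hy])
  have hschur : -R * ⅟(y • 1 : Matrix n n K) * -(Rᵀ * (1 + P)) = y⁻¹ • (R * Rᵀ * (1 + P)) := by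
    simp [show ⅟(y • 1 : Matrix n n K) = y⁻¹ • 1 from rfl, Matrix.mul_assoc]
  have hscale : y • P - R * Rᵀ * (1 + P) = y • (P - y⁻¹ • (R * Rᵀ * (1 + P))) := by
    rw [smul_sub, smul_smul, mul_inv_cancel₀ hy, one_smul]
  rw [← one_mul (det (fromBlocks P _ _ _)), ← hL, ← det_mul, hLN, det_fromBlocks₂₂, hschur,
    hscale, det_smul, det_smul, det_one]
  ring

theorem fromRows_zero_mul_mul_transpose {α l o p : Type*} [CommRing α] [Fintype p]
    (B : Matrix l p α) (M : Matrix p p α) :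
    fromRows B (0 : Matrix o p α) * M * (fromRows B (0 : Matrix o p α))ᵀ =
      fromBlocks (B * M * Bᵀ) 0 0 0 := by
  rw [fromRows_mul, transpose_fromRows, fromRows_mul_fromCols]
  simp

theorem one_kronecker_smul_one_sub {α l o : Type*} [CommRing α] [DecidableEq l] [DecidableEq o]
    (x : α) (N : Matrix o o α) :
    (1 : Matrix l l α) ⊗ₖ (x • 1 - N) = x • 1 - (1 : Matrix l l α) ⊗ₖ N := by
  ext ⟨e, w⟩ ⟨f, w'⟩
  by_cases h : e = f <;> simp [one_apply, h, mul_sub]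

end Blocks

section Cospectral

variable {n₁ n₂ : Type*} [Fintype n₁] [DecidableEq n₁] [Fintype n₂] [DecidableEq n₂]

theorem IsHermitian.charpoly_aeval {n : Type*} [Fintype n] [DecidableEq n] {A : Matrix n n ℝ}
    (hA : A.IsHermitian) (p : ℝ[X]) :
    (aeval A p).charpoly = (A.charpoly.roots.map fun t => X - C (p.eval t)).prod := by
  rw [← cfc_polynomial p A hA.isSelfAdjoint, hA.charpoly_cfc_eq,
    hA.roots_charpoly_eq_eigenvalues, Multiset.map_map]
  rfl

theorem charpoly_aeval_eq_of_charpoly_eq {A₁ : Matrix n₁ n₁ ℝ} {A₂ : Matrix n₂ n₂ ℝ}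
    (hA₁ : A₁.IsHermitian) (hA₂ : A₂.IsHermitian) (h : A₁.charpoly = A₂.charpoly) (p : ℝ[X]) :
    (aeval A₁ p).charpoly = (aeval A₂ p).charpoly := by
  rw [hA₁.charpoly_aeval, hA₂.charpoly_aeval, h]

theorem card_eq_of_charpoly_eq {R : Type*} [CommRing R] [Nontrivial R] {M₁ : Matrix n₁ n₁ R}
    {M₂ : Matrix n₂ n₂ R} (h : M₁.charpoly = M₂.charpoly) :
    Fintype.card n₁ = Fintype.card n₂ := by
  rw [← charpoly_natDegree_eq_dim M₁, ← charpoly_natDegree_eq_dim M₂, h]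

theorem trace_eq_of_charpoly_eq {R : Type*} [CommRing R] {M₁ : Matrix n₁ n₁ R}
    {M₂ : Matrix n₂ n₂ R} (h : M₁.charpoly = M₂.charpoly) : M₁.trace = M₂.trace := by
  rw [trace_eq_neg_charpoly_nextCoeff, trace_eq_neg_charpoly_nextCoeff, h]

theorem det_eq_of_charpoly_eq {R : Type*} [CommRing R] [Nontrivial R] {M₁ : Matrix n₁ n₁ R}
    {M₂ : Matrix n₂ n₂ R} (h : M₁.charpoly = M₂.charpoly) : M₁.det = M₂.det := by
  rw [det_eq_sign_charpoly_coeff, det_eq_sign_charpoly_coeff, h, card_eq_of_charpoly_eq h]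

end Cospectral

theorem eval_charpoly_eq_det_smul_one_sub {R n : Type*} [CommRing R] [Fintype n] [DecidableEq n]
    (M : Matrix n n R) (x : R) : M.charpoly.eval x = det (x • 1 - M) := by
  rw [eval_charpoly, scalar_apply, smul_one_eq_diagonal]

end Matrix

theorem Polynomial.eq_of_eval_eq_of_eval_ne_zero {R : Type*} [CommRing R] [IsDomain R]
    [Infinite R] {p q r : R[X]} (hr : r ≠ 0) (h : ∀ x, r.eval x ≠ 0 → p.eval x = q.eval x) :
    p = q :=
  eq_of_infinite_eval_eq p q <| (finite_setOfPred_isRoot hr).infinite_compl.mono fun x hx => h x hx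

namespace SimpleGraph

section Cospectral

variable {V₁ V₂ : Type*} [Fintype V₁] [DecidableEq V₁] [Fintype V₂] [DecidableEq V₂]
  {G₁ : SimpleGraph V₁} {G₂ : SimpleGraph V₂} [DecidableRel G₁.Adj] [DecidableRel G₂.Adj]

theorem trace_adjMatrix_sq {V : Type*} [Fintype V] [DecidableEq V] (G : SimpleGraph V)
    [DecidableRel G.Adj] : ((G.adjMatrix ℝ) ^ 2).trace = 2 * Fintype.card G.edgeSet := by
  rw [sq, trace]
  simp_rw [diag_apply, adjMatrix_mul_self_apply_self]
  exact_mod_cast (G.sum_degrees_eq_twice_card_edges).trans (by rw [edgeFinset_card])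

theorem card_edgeSet_eq_of_charpoly_adjMatrix_eq
    (h : (G₁.adjMatrix ℝ).charpoly = (G₂.adjMatrix ℝ).charpoly) :
    Fintype.card G₁.edgeSet = Fintype.card G₂.edgeSet := by
  have := trace_eq_of_charpoly_eq <| charpoly_aeval_eq_of_charpoly_eq
    (isHermitian_adjMatrix ℝ G₁) (isHermitian_adjMatrix ℝ G₂) h (X ^ 2)
  rw [map_pow, map_pow, aeval_X, aeval_X, trace_adjMatrix_sq, trace_adjMatrix_sq] at this
  exact_mod_cast mul_left_cancel₀ two_ne_zero this

theorem IsRegularOfDegree.of_charpoly_adjMatrix_eq {c₁ c₂ : ℕ} (h₁ : G₁.IsRegularOfDegree c₁)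
    (h₂ : G₂.IsRegularOfDegree c₂) (h : (G₁.adjMatrix ℝ).charpoly = (G₂.adjMatrix ℝ).charpoly) :
    G₂.IsRegularOfDegree c₁ := by
  have hsum₁ := G₁.sum_degrees_eq_twice_card_edges
  have hsum₂ := G₂.sum_degrees_eq_twice_card_edges
  simp only [h₁.degree_eq, h₂.degree_eq, sum_const, card_univ, smul_eq_mul,
    edgeFinset_card] at hsum₁ hsum₂
  rw [card_eq_of_charpoly_eq h, card_edgeSet_eq_of_charpoly_adjMatrix_eq h, ← hsum₂] at hsum₁
  intro v
  have : 0 < Fintype.card V₂ := Fintype.card_pos_iff.mpr ⟨v⟩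
  rw [h₂ v, Nat.eq_of_mul_eq_mul_left this hsum₁]

end Cospectral

section Incidence

variable {U : Type*} [DecidableEq U] (F : SimpleGraph U)

theorem incMat_apply [DecidableRel F.Adj] (u : U) (e : F.edgeSet) :
    incMat F u e = F.incMatrix ℝ u e := by
  simp [incMat, incMatrix_apply', incidenceSet, e.2]

theorem incMat_transpose_mul_apply_of_ne [Fintype U] {e f : F.edgeSet} (hef : e ≠ f) :
    ((incMat F)ᵀ * incMat F) e f = if F.lineGraph.Adj e f then 1 else 0 := by
  simp only [mul_apply, transpose_apply, incMat, of_apply, ite_zero_mul_ite_zero, one_mul,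
    sum_boole, lineGraph_adj_iff_exists, ne_eq, hef, not_false_eq_true, true_and]
  split_ifs with hv
  · obtain ⟨v, hve, hvf⟩ := hv
    have : univ.filter (fun u => u ∈ (e : Sym2 U) ∧ u ∈ (f : Sym2 U)) = {v} := by
      refine eq_singleton_iff_unique_mem.mpr ⟨by simp [hve, hvf], fun u hu => ?_⟩
      rw [mem_filter] at hu
      by_contra huv
      exact hef (Subtype.ext (Sym2.eq_of_ne_mem huv hu.2.1 hve hu.2.2 hvf))
    simp [this]
  · simpa [filter_eq_empty_iff] using hv

variable [Fintype U] [DecidableRel F.Adj]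

theorem incMat_transpose_mul :
    (incMat F)ᵀ * incMat F = F.lineGraph.adjMatrix ℝ + (2 : ℝ) • 1 := by
  ext e f
  by_cases hef : e = f
  · subst hef
    have h2 := F.incMatrix_transpose_mul_diag (R := ℝ) (e := e)
    simp only [mul_apply, transpose_apply, e.2, if_true] at h2
    simp [mul_apply, incMat_apply, h2]
  · simp [incMat_transpose_mul_apply_of_ne F hef, hef]

theorem incMat_mul_transpose_eq :
    incMat F * (incMat F)ᵀ = F.incMatrix ℝ * (F.incMatrix ℝ)ᵀ := by
  ext u v
  simp only [mul_apply, transpose_apply, incMat_apply]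
  rw [← Finset.sum_subtype F.edgeFinset (fun _ => mem_edgeFinset)
    (fun e => F.incMatrix ℝ u e * F.incMatrix ℝ v e)]
  refine Finset.sum_subset (subset_univ _) fun e _ he => ?_
  rw [incMatrix_of_notMem_incidenceSet F fun h => he (mem_edgeFinset.mpr h.1), zero_mul]

theorem incMat_mul_transpose {c : ℕ} (hF : F.IsRegularOfDegree c) :
    incMat F * (incMat F)ᵀ = F.adjMatrix ℝ + (c : ℝ) • 1 := by
  rw [incMat_mul_transpose_eq, incMatrix_mul_transpose]
  ext u v
  by_cases h : u = v
  · simp [h, hF v]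
  · simp [h]

end Incidence

section TEdgeCorona

variable {U W : Type*} (F : SimpleGraph U) (H : SimpleGraph W)

@[simp] theorem tEdgeCorona_adj_inl_inl {u v : U} :
    (tEdgeCorona F H).Adj (.inl u) (.inl v) ↔ F.Adj u v := by
  simp [tEdgeCorona, F.adj_comm u v]
  exact fun h => (F.ne_of_adj h).symm

@[simp] theorem tEdgeCorona_adj_inl_edge {u : U} {e : F.edgeSet} :
    (tEdgeCorona F H).Adj (.inl u) (.inr (.inl e)) ↔ u ∈ (e : Sym2 U) := by
  simp [tEdgeCorona]

@[simp] theorem tEdgeCorona_adj_inl_copy {u : U} {ew : F.edgeSet × W} :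
    (tEdgeCorona F H).Adj (.inl u) (.inr (.inr ew)) ↔ u ∈ (ew.1 : Sym2 U) := by
  simp [tEdgeCorona]

@[simp] theorem tEdgeCorona_adj_edge_edge {e f : F.edgeSet} :
    (tEdgeCorona F H).Adj (.inr (.inl e)) (.inr (.inl f)) ↔ F.lineGraph.Adj e f := by
  simp [tEdgeCorona, lineGraph_adj_iff_exists]
  exact fun _ v hf he => ⟨v, he, hf⟩

@[simp] theorem tEdgeCorona_adj_edge_copy {e : F.edgeSet} {fw : F.edgeSet × W} :
    ¬ (tEdgeCorona F H).Adj (.inr (.inl e)) (.inr (.inr fw)) := by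
  simp [tEdgeCorona]

@[simp] theorem tEdgeCorona_adj_copy_copy {ew fw : F.edgeSet × W} :
    (tEdgeCorona F H).Adj (.inr (.inr ew)) (.inr (.inr fw)) ↔
      ew.1 = fw.1 ∧ H.Adj ew.2 fw.2 := by
  simp only [tEdgeCorona, fromRel_adj, ne_eq, Sum.inr.injEq]
  constructor
  · rintro ⟨-, h | ⟨h₁, h₂⟩⟩
    exacts [h, ⟨h₁.symm, h₂.symm⟩]
  · rintro ⟨h₁, h₂⟩
    exact ⟨fun h => H.ne_of_adj h₂ (congrArg Prod.snd h), .inl ⟨h₁, h₂⟩⟩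

variable [DecidableEq U] [DecidableRel F.Adj]

def copyIncMat (W : Type*) : Matrix U (F.edgeSet × W) ℝ :=
  of fun u ew => incMat F u ew.1

theorem adjMatrix_tEdgeCorona_submatrix_sumAssoc [DecidableEq W] [DecidableRel H.Adj] :
    ((tEdgeCorona F H).adjMatrix ℝ).submatrix (Equiv.sumAssoc _ _ _) (Equiv.sumAssoc _ _ _) =
      fromBlocks (fromBlocks (F.adjMatrix ℝ) (incMat F) (incMat F)ᵀ (F.lineGraph.adjMatrix ℝ))
        (fromRows (copyIncMat F W) 0) (fromRows (copyIncMat F W) 0)ᵀ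
        ((1 : Matrix F.edgeSet F.edgeSet ℝ) ⊗ₖ H.adjMatrix ℝ) := by
  ext ((u | e) | ⟨e, w⟩) ((v | f) | ⟨f, w'⟩) <;>
    simp [incMat, copyIncMat, one_apply, adj_comm _ (Sum.inr _) (Sum.inl _),
      adj_comm _ (Sum.inr (Sum.inr _)) (Sum.inr (Sum.inl _)), and_comm, ite_and]

variable [Fintype U]

theorem copyIncMat_mul_one_kronecker_mul_transpose [Fintype W] [DecidableEq W]
    (N : Matrix W W ℝ) :
    copyIncMat F W * ((1 : Matrix F.edgeSet F.edgeSet ℝ) ⊗ₖ N) * (copyIncMat F W)ᵀ =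
      (∑ i, ∑ j, N i j) • (incMat F * (incMat F)ᵀ) := by
  ext u v
  simp [copyIncMat, mul_apply, Fintype.sum_prod_type, one_apply, Finset.mul_sum, Finset.sum_mul]
  refine Finset.sum_congr rfl fun e _ => ?_
  rw [Finset.sum_comm]
  exact sum_congr rfl fun _ _ => sum_congr rfl fun _ _ => by ring

end TEdgeCorona

end SimpleGraph

open SimpleGraph

theorem coronal_adjMatrix_of_isRegularOfDegree {W : Type*} [Fintype W] [DecidableEq W]
    {H : SimpleGraph W} [DecidableRel H.Adj] {d : ℕ} (hH : H.IsRegularOfDegree d) {x : ℝ}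
    (hx : IsUnit (x • 1 - H.adjMatrix ℝ).det) :
    coronal (H.adjMatrix ℝ) x = Fintype.card W / (x - d) := by
  set B := x • 1 - H.adjMatrix ℝ
  have hB : B *ᵥ (fun _ => 1) = fun _ => x - d := by
    ext i
    simp [B, sub_mulVec, smul_mulVec, hH i]
  have hrow (i : W) : (x - d) * ∑ j, B⁻¹ i j = 1 := by
    have := congrFun (congrArg (B⁻¹ *ᵥ ·) hB) i
    simp only [mulVec_mulVec, nonsing_inv_mul _ hx, one_mulVec] at this
    simpa [mulVec, dotProduct, mul_comm, Finset.mul_sum] using this.symm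
  by_cases hxd : x = d
  · have : IsEmpty W := ⟨fun i => by simpa [hxd] using hrow i⟩
    simp [coronal]
  · have hsum (i : W) : ∑ j, B⁻¹ i j = (x - d)⁻¹ := eq_inv_of_mul_eq_one_right (hrow i)
    show ∑ i, ∑ j, B⁻¹ i j = _
    simp [hsum, div_eq_mul_inv]

theorem det_smul_one_sub_adjMatrix_tEdgeCorona_eq_det_fromBlocks {U W : Type*} [Fintype U]
    [DecidableEq U] [Fintype W] [DecidableEq W] (F : SimpleGraph U) (H : SimpleGraph W)
    [DecidableRel F.Adj] [DecidableRel H.Adj] {x : ℝ} (hH : IsUnit (x • 1 - H.adjMatrix ℝ).det) :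
    det (x • 1 - (tEdgeCorona F H).adjMatrix ℝ) =
      det (x • 1 - H.adjMatrix ℝ) ^ Fintype.card F.edgeSet *
        det (fromBlocks (x • 1 - (F.adjMatrix ℝ + coronal (H.adjMatrix ℝ) x •
          (incMat F * (incMat F)ᵀ))) (-incMat F) (-(incMat F)ᵀ)
          ((x + 2) • 1 - (incMat F)ᵀ * incMat F)) := by
  have hcopies : IsUnit (x • 1 - (1 : Matrix F.edgeSet F.edgeSet ℝ) ⊗ₖ H.adjMatrix ℝ).det := by
    rw [← one_kronecker_smul_one_sub, det_kronecker, det_one, one_pow, one_mul]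
    exact hH.pow _
  have hline : x • 1 - F.lineGraph.adjMatrix ℝ = (x + 2) • 1 - (incMat F)ᵀ * incMat F := by
    rw [incMat_transpose_mul, add_smul]
    abel
  rw [← det_smul_one_sub_submatrix_equiv (Equiv.sumAssoc _ _ _),
    adjMatrix_tEdgeCorona_submatrix_sumAssoc, det_smul_one_sub_fromBlocks _ _ _ _ _ hcopies,
    ← one_kronecker_smul_one_sub, det_kronecker, inv_kronecker, inv_one,
    fromRows_zero_mul_mul_transpose, copyIncMat_mul_one_kronecker_mul_transpose, fromBlocks_add,
    smul_one_sub_fromBlocks]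
  simp only [add_zero, det_one, one_pow, one_mul, hline, coronal]

/-- `q(A) = (x + 2) P - R Rᵀ (1 + P)` where `R Rᵀ = A + c` and `P = x - A - γ R Rᵀ` is the vertex
block left after eliminating the copies of the attached graph, whose coronal is `γ`. -/
noncomputable def tEdgeCoronaPoly (c x γ : ℝ) : ℝ[X] :=
  C (x + 2) * (C x - X - C γ * (X + C c)) - (X + C c) * (1 + (C x - X - C γ * (X + C c)))

theorem aeval_tEdgeCoronaPoly {n : Type*} [Fintype n] [DecidableEq n] (A : Matrix n n ℝ)
    (c x γ : ℝ) :
    aeval A (tEdgeCoronaPoly c x γ) =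
      (x + 2) • (x • 1 - (A + γ • (A + c • 1))) -
        (A + c • 1) * (1 + (x • 1 - (A + γ • (A + c • 1)))) := by
  simp only [tEdgeCoronaPoly, map_sub, map_mul, map_add, aeval_C, aeval_X, map_one,
    Algebra.algebraMap_eq_smul_one, Matrix.smul_mul, Matrix.one_mul]
  rw [← add_smul, Matrix.smul_mul, Matrix.one_mul]
  simp only [sub_sub]

theorem det_smul_one_sub_adjMatrix_tEdgeCorona {U W : Type*} [Fintype U] [DecidableEq U]
    [Fintype W] [DecidableEq W] (F : SimpleGraph U) (H : SimpleGraph W) [DecidableRel F.Adj]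
    [DecidableRel H.Adj] {c : ℕ} (hF : F.IsRegularOfDegree c) {x : ℝ}
    (hH : IsUnit (x • 1 - H.adjMatrix ℝ).det) (hx : x + 2 ≠ 0) :
    det (x • 1 - (tEdgeCorona F H).adjMatrix ℝ) * (x + 2) ^ Fintype.card U =
      det (x • 1 - H.adjMatrix ℝ) ^ Fintype.card F.edgeSet * (x + 2) ^ Fintype.card F.edgeSet *
        det (aeval (F.adjMatrix ℝ) (tEdgeCoronaPoly c x (coronal (H.adjMatrix ℝ) x))) := by
  rw [det_smul_one_sub_adjMatrix_tEdgeCorona_eq_det_fromBlocks F H hH, mul_assoc,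
    det_fromBlocks_smul_one_sub_transpose_mul_self _ _ hx, incMat_mul_transpose F hF,
    aeval_tEdgeCoronaPoly, mul_assoc]

/-- If `F₁` and `F₂` are A-cospectral regular graphs and `H₁` and `H₂` are A-cospectral
regular graphs, then `F₁ ⊟_T H₁` and `F₂ ⊟_T H₂` are A-cospectral. -/
theorem tEdgeCorona_A_cospectral_pair {U₁ U₂ W₁ W₂ : Type*}
    [Fintype U₁] [DecidableEq U₁] [Fintype U₂] [DecidableEq U₂]
    [Fintype W₁] [DecidableEq W₁] [Fintype W₂] [DecidableEq W₂]
    (F₁ : SimpleGraph U₁) (F₂ : SimpleGraph U₂) (H₁ : SimpleGraph W₁) (H₂ : SimpleGraph W₂)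
    [DecidableRel F₁.Adj] [DecidableRel F₂.Adj] [DecidableRel H₁.Adj] [DecidableRel H₂.Adj]
    (c₁ c₂ d₁ d₂ : ℕ) (hregF₁ : F₁.IsRegularOfDegree c₁) (hregF₂ : F₂.IsRegularOfDegree c₂)
    (hregH₁ : H₁.IsRegularOfDegree d₁) (hregH₂ : H₂.IsRegularOfDegree d₂)
    (hcosF : (F₁.adjMatrix ℝ).charpoly = (F₂.adjMatrix ℝ).charpoly)
    (hcosH : (H₁.adjMatrix ℝ).charpoly = (H₂.adjMatrix ℝ).charpoly) :
    ((tEdgeCorona F₁ H₁).adjMatrix ℝ).charpoly =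
      ((tEdgeCorona F₂ H₂).adjMatrix ℝ).charpoly := by
  have hF₂ := hregF₁.of_charpoly_adjMatrix_eq hregF₂ hcosF
  have hH₂ := hregH₁.of_charpoly_adjMatrix_eq hregH₂ hcosH
  refine eq_of_eval_eq_of_eval_ne_zero (r := (X + C 2) * (H₁.adjMatrix ℝ).charpoly)
    (mul_ne_zero (X_add_C_ne_zero 2) (charpoly_monic _).ne_zero) fun x hx => ?_
  rw [eval_mul, eval_add, eval_X, eval_C] at hx
  obtain ⟨hx2, hH₁x⟩ := mul_ne_zero_iff.mp hx
  have hφ := congrArg (eval x) hcosH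
  simp only [eval_charpoly_eq_det_smul_one_sub] at hH₁x hφ ⊢
  have hΓ : coronal (H₂.adjMatrix ℝ) x = coronal (H₁.adjMatrix ℝ) x := by
    rw [coronal_adjMatrix_of_isRegularOfDegree hH₂ (hφ ▸ hH₁x.isUnit),
      coronal_adjMatrix_of_isRegularOfDegree hregH₁ hH₁x.isUnit, card_eq_of_charpoly_eq hcosH]
  have hq := det_eq_of_charpoly_eq <| charpoly_aeval_eq_of_charpoly_eq
    (isHermitian_adjMatrix ℝ F₁) (isHermitian_adjMatrix ℝ F₂) hcosF
    (tEdgeCoronaPoly c₁ x (coronal (H₁.adjMatrix ℝ) x))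
  have h₁ := det_smul_one_sub_adjMatrix_tEdgeCorona F₁ H₁ hregF₁ hH₁x.isUnit hx2
  have h₂ := det_smul_one_sub_adjMatrix_tEdgeCorona F₂ H₂ hF₂ (hφ ▸ hH₁x.isUnit) hx2
  rw [← hφ, hΓ, ← hq, ← card_edgeSet_eq_of_charpoly_adjMatrix_eq hcosF,
    ← card_eq_of_charpoly_eq hcosF] at h₂
  exact mul_right_cancel₀ (pow_ne_zero _ hx2) (h₁.trans h₂.symm)
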